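/- Let v₀ ∈ (-1,0), Σ₀ ∈ ℝ, and consider the linearized perturbation system around a point of the sonic line with γ = v₀² + 1. The curve c(Σ₀) = (δ_Σ, δ_A, δ_v) = (Σ - Σ₀, A + (v₀²+1)(Σ₀ + (Σ₀+2)v₀²)/(4v₀³), v - v₀) of equilibria has tangent vector (1, -(v₀²+1)²/(4v₀³), 0) at the origin, and this tangent vector is parallel to the eigenvector (-4v₀³/(v₀²+1)², 1, 0) associated with the zero eigenvalue of the linearization; i.e., the set of equilibria is normally hyperbolic at points where the other two eigenvalues have nonzero real parts. -/

import Mathlib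

noncomputable section

/-- Coefficient of `δ_v` in the `δ_Σ` equation of the linearized sonic-line system. -/
def a₁ (C₂ v₀ S₀ : ℝ) : ℝ :=
  S₀ * ((C₂ + 2) * v₀ ^ 4 + 2 * (C₂ - 2) * v₀ ^ 2 + C₂ - 2) / (2 * v₀) +
    C₂ * S₀ ^ 3 * (-3 * v₀ ^ 4 + 2 * v₀ ^ 2 + 1) ^ 2 / (8 * v₀ ^ 5) +
    S₀ ^ 2 * ((5 * C₂ + 1) * v₀ ^ 6 - (C₂ + 3) * v₀ ^ 4 + (3 * C₂ - 5) * v₀ ^ 2 +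
      C₂ - 1) / (2 * v₀ ^ 3)

/-- Coefficient of `δ_v` in the `δ_A` equation of the linearized sonic-line system. -/
def a₂ (C₂ v₀ S₀ : ℝ) : ℝ :=
  -((v₀ ^ 2 + 1) * (C₂ * (v₀ ^ 2 + 1) ^ 2 - 4 * v₀ ^ 2)) / (4 * v₀ ^ 2) -
    S₀ * (v₀ ^ 2 + 1) * (11 * C₂ * v₀ ^ 6 + (C₂ - 20) * v₀ ^ 4 +
      (9 * C₂ - 4) * v₀ ^ 2 + 3 * C₂) / (8 * v₀ ^ 4) -
    C₂ * S₀ ^ 3 * (3 * v₀ ^ 6 + v₀ ^ 4 - 3 * v₀ ^ 2 - 1) ^ 2 / (32 * v₀ ^ 8) -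
    S₀ ^ 2 * (v₀ ^ 2 + 1) * (19 * C₂ * v₀ ^ 8 - 4 * (C₂ + 4) * v₀ ^ 6 +
      2 * (C₂ - 8) * v₀ ^ 4 + 12 * C₂ * v₀ ^ 2 + 3 * C₂) / (16 * v₀ ^ 6)

/-- Coefficient of `δ_v` in the `δ_v` equation of the linearized sonic-line system. -/
def a₃ (v₀ S₀ : ℝ) : ℝ :=
  v₀ ^ 4 + S₀ * (v₀ ^ 2 - 1) * (v₀ ^ 2 + 1) ^ 2 / (2 * v₀ ^ 2) - 1

/-- Matrix of the linearized perturbation system `(δ_Σ, δ_A, δ_v)` at a point of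
the sonic line with parameters `v₀, Σ₀, C₂` (and `γ = v₀² + 1`). -/
def Mlin (C₂ v₀ S₀ : ℝ) : Matrix (Fin 3) (Fin 3) ℝ :=
  !![0, 0, a₁ C₂ v₀ S₀;
     0, 0, a₂ C₂ v₀ S₀;
     v₀ * (v₀ ^ 2 - 1) * (v₀ ^ 2 + 1) ^ 2 / (v₀ ^ 2 + 1),
       v₀ * (v₀ ^ 2 - 1) * (4 * v₀ ^ 3) / (v₀ ^ 2 + 1), a₃ v₀ S₀]

lemma Matrix.mulVec_vecCons_neg_one_zero_eq_zero {m R : Type*} [CommRing R]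
    (M : Matrix m (Fin 3) R) (a : R) (hcol : ∀ i, M i 1 = a * M i 0) :
    M.mulVec ![-a, 1, 0] = 0 := by
  ext i
  simp only [Matrix.mulVec, dotProduct, Fin.sum_univ_three, Matrix.cons_val_zero,
    Matrix.cons_val_one, Matrix.cons_val, hcol, mul_zero, add_zero, Pi.zero_apply]
  ring

lemma vecCons_one_zero_eq_smul {K : Type*} [Field K] {a : K} (ha : a ≠ 0) :
    ![a, 1, 0] = a • ![1, a⁻¹, 0] := by
  ext i
  fin_cases i <;> simp [ha]

lemma Mlin_apply_one_eq_mul_apply_zero (C₂ v₀ S₀ : ℝ) (i : Fin 3) :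
    Mlin C₂ v₀ S₀ i 1 = 4 * v₀ ^ 3 / (v₀ ^ 2 + 1) ^ 2 * Mlin C₂ v₀ S₀ i 0 := by
  have hγ : v₀ ^ 2 + 1 ≠ 0 := by positivity
  fin_cases i <;> simp only [Mlin, Fin.zero_eta, Fin.mk_one, Fin.reduceFinMk, Matrix.of_apply,
    Matrix.cons_val', Matrix.cons_val_zero, Matrix.cons_val_one, Matrix.cons_val,
    Matrix.cons_val_fin_one, mul_zero]
  field_simp

theorem sonic_line_normally_hyperbolic_general (C₂ v₀ S₀ : ℝ) (hv₂ : v₀ < 0) :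
    letI t : Fin 3 → ℝ := ![1, -(v₀ ^ 2 + 1) ^ 2 / (4 * v₀ ^ 3), 0]
    letI e : Fin 3 → ℝ := ![-4 * v₀ ^ 3 / (v₀ ^ 2 + 1) ^ 2, 1, 0]
    (Mlin C₂ v₀ S₀).mulVec e = 0 ∧ e ≠ 0 ∧
    ∃ c : ℝ, c ≠ 0 ∧ e = c • t := by
  have hc : -4 * v₀ ^ 3 / (v₀ ^ 2 + 1) ^ 2 ≠ 0 := by
    have : v₀ ≠ 0 := hv₂.ne
    positivity
  have he : -4 * v₀ ^ 3 / (v₀ ^ 2 + 1) ^ 2 = -(4 * v₀ ^ 3 / (v₀ ^ 2 + 1) ^ 2) := by ring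
  have ht : -(v₀ ^ 2 + 1) ^ 2 / (4 * v₀ ^ 3) = (-4 * v₀ ^ 3 / (v₀ ^ 2 + 1) ^ 2)⁻¹ := by
    rw [inv_div, neg_mul, div_neg, neg_div]
  refine ⟨?_, fun h ↦ by simpa using congrFun h 1, _, hc, ?_⟩
  · rw [he]
    exact Matrix.mulVec_vecCons_neg_one_zero_eq_zero _ _ (Mlin_apply_one_eq_mul_apply_zero C₂ v₀ S₀)
  · rw [ht]
    exact vecCons_one_zero_eq_smul hc

/-- The tangent vector `(1, -(v₀²+1)²/(4v₀³), 0)` of the curve of sonic-line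
equilibria is parallel to the eigenvector `(-4v₀³/(v₀²+1)², 1, 0)` of the zero
eigenvalue of the linearization: that vector lies in the kernel of `Mlin`
(so `0` is an eigenvalue with eigenvector tangent to the set of equilibria,
which is therefore normally hyperbolic wherever the other two eigenvalues have
nonzero real parts). -/
theorem sonic_line_normally_hyperbolic (C₂ v₀ S₀ : ℝ) (hv₁ : -1 < v₀) (hv₂ : v₀ < 0) :
    letI t : Fin 3 → ℝ := ![1, -(v₀ ^ 2 + 1) ^ 2 / (4 * v₀ ^ 3), 0]
    letI e : Fin 3 → ℝ := ![-4 * v₀ ^ 3 / (v₀ ^ 2 + 1) ^ 2, 1, 0]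
    (Mlin C₂ v₀ S₀).mulVec e = 0 ∧ e ≠ 0 ∧
    ∃ c : ℝ, c ≠ 0 ∧ e = c • t :=
  sonic_line_normally_hyperbolic_general C₂ v₀ S₀ hv₂
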